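/- arXiv:2404.06844 — 2 statements merged into one kernel-verified Lean document; each statement's English description precedes it below -/
import Mathlib

section
/- Let L be the rank-2 lattice with Gram matrix [[0, n],[n, -2]] for an integer n ≥ 2, and let L' be the lattice with Gram matrix [[0, n],[n, -2m²]] where m is an integer with m² ≢ 1 (mod n). Then L and L' are not isometric. -/
open Matrix

/-!
The vector `e₂ = (0, 1)` has norm `-2` in `L`, so an isometry would send it to a vector `(c, d)`
of norm `-2` in `L'`, i.e. `d (n c - m² d) = -1`. Then `d = ±1`, and reducing mod `n` gives
`m² = m² d² ≡ 1`.
-/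

theorem dotProduct_mulVec_self_of_topLeft_eq_zero {R : Type*} [CommRing R] (n k : R)
    (v : Fin 2 → R) :
    v ⬝ᵥ !![0, n; n, k] *ᵥ v = 2 * n * v 0 * v 1 + k * v 1 ^ 2 := by
  simp only [dotProduct, mulVec, Fin.sum_univ_two, of_apply, cons_val', cons_val_zero,
    cons_val_one, empty_val', cons_val_fin_one]
  ring

theorem Int.dvd_sq_sub_one_of_mul_eq_neg_one {n m c d : ℤ} (h : d * (n * c - m ^ 2 * d) = -1) :
    n ∣ m ^ 2 - 1 := by
  have hd : d ^ 2 = 1 :=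
    Int.isUnit_sq (IsUnit.of_mul_eq_one (-(n * c - m ^ 2 * d)) (by linear_combination -h))
  exact ⟨c * d, by linear_combination -h - m ^ 2 * hd⟩

theorem stmt3_general (n m : ℤ) (hm : ¬ (n ∣ m ^ 2 - 1)) :
    ¬ ∃ f : (Fin 2 → ℤ) ≃ₗ[ℤ] (Fin 2 → ℤ),
      ∀ v w : Fin 2 → ℤ,
        (f v) ⬝ᵥ (!![0, n; n, -2 * m ^ 2]).mulVec (f w) =
          v ⬝ᵥ (!![0, n; n, -2]).mulVec w := by
  rintro ⟨f, hf⟩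
  have hnorm := hf ![0, 1] ![0, 1]
  simp only [dotProduct_mulVec_self_of_topLeft_eq_zero] at hnorm
  have hcd : f ![0, 1] 1 * (n * f ![0, 1] 0 - m ^ 2 * f ![0, 1] 1) = -1 :=
    mul_left_cancel₀ two_ne_zero (by norm_num at hnorm; linear_combination hnorm)
  exact hm (Int.dvd_sq_sub_one_of_mul_eq_neg_one hcd)

/-- The rank-2 lattices with Gram matrices `[[0,n],[n,-2]]` (n ≥ 2) and
`[[0,n],[n,-2m²]]` with `m² ≢ 1 (mod n)` are not isometric. -/
theorem stmt3 (n m : ℤ) (hn : 2 ≤ n) (hm : ¬ (n ∣ m ^ 2 - 1)) :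
    ¬ ∃ f : (Fin 2 → ℤ) ≃ₗ[ℤ] (Fin 2 → ℤ),
      ∀ v w : Fin 2 → ℤ,
        (f v) ⬝ᵥ (!![0, n; n, -2 * m ^ 2]).mulVec (f w) =
          v ⬝ᵥ (!![0, n; n, -2]).mulVec w :=
  stmt3_general n m hm
end

section
/- Let K and L be fields containing a common field k. If K/k is a finite field extension of degree m and L/k is a finite field extension of degree n with gcd(m, n) = 1, then K ⊗_k L is a field. -/
open TensorProduct

set_option maxHeartbeats 1000000 in
set_option synthInstance.maxHeartbeats 400000 in
/-- If `K/k` and `L/k` are finite field extensions of coprime degrees, then `K ⊗_k L`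
is a field (Cohn's criterion). -/
theorem stmt5 (k K L : Type*) [Field k] [Field K] [Field L] [Algebra k K] [Algebra k L]
    [FiniteDimensional k K] [FiniteDimensional k L]
    (h : Nat.Coprime (Module.finrank k K) (Module.finrank k L)) :
    IsField (K ⊗[k] L) := by
  by_contra hnf
  set A := K ⊗[k] L
  obtain ⟨M, hM⟩ := Ideal.exists_maximal A
  have hMne : M ≠ ⊥ := Ring.ne_bot_of_isMaximal_of_not_isField hM hnf
  let F := A ⧸ M
  letI : Field F := Ideal.Quotient.field M
  letI : Algebra L F := ((Ideal.Quotient.mkₐ k M).comp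
    (Algebra.TensorProduct.includeRight : L →ₐ[k] A)).toRingHom.toAlgebra
  haveI : IsScalarTower k L F := IsScalarTower.of_algebraMap_eq' (by
    ext x
    show algebraMap k F x = (Ideal.Quotient.mkₐ k M)
      ((Algebra.TensorProduct.includeRight : L →ₐ[k] A) (algebraMap k L x))
    rw [AlgHom.commutes]
    rfl)
  haveI : FiniteDimensional K F := FiniteDimensional.right k K F
  haveI : FiniteDimensional L F := FiniteDimensional.right k L F
  have hK : Module.finrank k K ∣ Module.finrank k F :=
    ⟨Module.finrank K F, (Module.finrank_mul_finrank k K F).symm⟩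
  have hL : Module.finrank k L ∣ Module.finrank k F :=
    ⟨Module.finrank L F, (Module.finrank_mul_finrank k L F).symm⟩
  have hmn : Module.finrank k K * Module.finrank k L ∣ Module.finrank k F :=
    h.mul_dvd_of_dvd_of_dvd hK hL
  have hA : Module.finrank k A = Module.finrank k K * Module.finrank k L :=
    Module.finrank_tensorProduct
  have hFpos : 0 < Module.finrank k F := Module.finrank_pos
  have hge : Module.finrank k A ≤ Module.finrank k F := hA ▸ Nat.le_of_dvd hFpos hmn
  have hadd : Module.finrank k (A ⧸ M.restrictScalars k)
      + Module.finrank k (M.restrictScalars k) = Module.finrank k A :=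
    Submodule.finrank_quotient_add_finrank (M.restrictScalars k)
  have hid : Module.finrank k F = Module.finrank k (A ⧸ M.restrictScalars k) := rfl
  have hMrank : Module.finrank k (M.restrictScalars k) = 0 := by omega
  have hres : M.restrictScalars k = ⊥ := Submodule.finrank_eq_zero.mp hMrank
  exact hMne (by ext x; simpa using Submodule.ext_iff.mp hres x)
end
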